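/- arXiv:2604.19854 — 3 statements merged into one kernel-verified Lean document; each statement's English description precedes it below -/
import Mathlib

section
/- For every even integer m ≥ 6, the largest real root ρ'(m) of the polynomial p_m(x) = x^4 - m·x^2 - (m-2)·x + m/2 - 1 satisfies ρ'(m) > (1 + √(4m-5))/2. -/
theorem stmt_0 (m : ℤ) (hm : Even m) (hm6 : 6 ≤ m) (ρ : ℝ)
    (hroot : ρ ^ 4 - (m : ℝ) * ρ ^ 2 - ((m : ℝ) - 2) * ρ + (m : ℝ) / 2 - 1 = 0)
    (hmax : ∀ x : ℝ, x ^ 4 - (m : ℝ) * x ^ 2 - ((m : ℝ) - 2) * x + (m : ℝ) / 2 - 1 = 0 → x ≤ ρ) :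
    ρ > (1 + Real.sqrt (4 * (m : ℝ) - 5)) / 2 := by
  set s : ℝ := Real.sqrt (4 * (m : ℝ) - 5) with hs
  have hm6' : (6 : ℝ) ≤ (m : ℝ) := by exact_mod_cast hm6
  have hs0 : 0 ≤ s := Real.sqrt_nonneg _
  have hs2 : s ^ 2 = 4 * (m : ℝ) - 5 := Real.sq_sqrt (by linarith)
  set L : ℝ := (1 + s) / 2 with hL
  have hL2 : L ^ 2 = L + (m : ℝ) - 3 / 2 := by
    rw [hL]; linear_combination hs2 / 4
  set f : ℝ → ℝ := fun x => x ^ 4 - (m : ℝ) * x ^ 2 - ((m : ℝ) - 2) * x + (m : ℝ) / 2 - 1 with hf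
  have hfL : f L = -1 / 4 := by
    show L ^ 4 - (m : ℝ) * L ^ 2 - ((m : ℝ) - 2) * L + (m : ℝ) / 2 - 1 = -1 / 4
    linear_combination (L ^ 2 + L - 1 / 2) * hL2
  have hsm : s < 2 * (m : ℝ) - 1 := by nlinarith
  have hLm : L < (m : ℝ) := by rw [hL]; linarith
  have hfm : 0 ≤ f (m : ℝ) := by
    show 0 ≤ (m : ℝ) ^ 4 - (m : ℝ) * (m : ℝ) ^ 2 - ((m : ℝ) - 2) * (m : ℝ) + (m : ℝ) / 2 - 1
    nlinarith [sq_nonneg ((m:ℝ)^2 - (m:ℝ) - 1), sq_nonneg ((m:ℝ) - 6)]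
  have hcont : ContinuousOn f (Set.Icc L (m : ℝ)) := by
    apply Continuous.continuousOn; fun_prop
  have hivt := intermediate_value_Icc (le_of_lt hLm) hcont
  have h0 : (0 : ℝ) ∈ Set.Icc (f L) (f (m : ℝ)) :=
    Set.mem_Icc.mpr ⟨by rw [hfL]; norm_num, hfm⟩
  obtain ⟨c, hc, hfc⟩ := hivt h0
  have hcρ : c ≤ ρ := hmax c hfc
  have hcL : L < c := by
    rcases lt_or_eq_of_le hc.1 with h | h
    · exact h
    · exfalso; rw [← h] at hfc; rw [hfL] at hfc; norm_num at hfc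
  calc (1 + s) / 2 = L := by rw [hL]
    _ < c := hcL
    _ ≤ ρ := hcρ
end

section
/- For every real m ≥ 18 and every real x ≥ L_m = (1 + √(4m-5))/2, one has R_same'(x) = 30x^2 + (2m-88)x + 28 - 11m/2 > 0; consequently R_same(x) = 10x^3 + (m-44)x^2 + (28 - 11m/2)x + 80 - 4m is strictly increasing on [L_m, ∞). -/
/-!
`R_same'` is a quadratic with positive leading coefficient, so around `L = L_m` it reads
`R_same'(x) = R_same'(L) + R_same''(L) (x - L) + 30 (x - L)²`. With `s = √(4m-5) ≥ 8` and
`s² = 4m - 5` one gets `R_same''(L) = 30 s + 2m - 58 > 0` and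
`R_same'(L) = (2ms + 51m - 58s - 92)/2 > 0`, hence `R_same' > 0` on `[L, ∞)`, and `R_same`
is strictly increasing there.
-/

open Real Set

noncomputable section

def rSame (m x : ℝ) : ℝ := 10 * x ^ 3 + (m - 44) * x ^ 2 + (28 - 11 * m / 2) * x + 80 - 4 * m

def rSameDeriv (m x : ℝ) : ℝ := 30 * x ^ 2 + (2 * m - 88) * x + 28 - 11 * m / 2

def leftEnd (m : ℝ) : ℝ := (1 + √(4 * m - 5)) / 2

end

theorem hasDerivAt_rSame (m x : ℝ) : HasDerivAt (rSame m) (rSameDeriv m x) x := by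
  have h := (((((hasDerivAt_pow 3 x).const_mul 10).add
    ((hasDerivAt_pow 2 x).const_mul (m - 44))).add
    ((hasDerivAt_id x).const_mul (28 - 11 * m / 2))).add_const 80).sub_const (4 * m)
  refine h.congr_deriv ?_
  rw [rSameDeriv]
  push_cast
  ring

theorem quadratic_pos_of_le {a b c L x : ℝ} (ha : 0 ≤ a) (hL : 0 < a * L ^ 2 + b * L + c)
    (hslope : 0 ≤ 2 * a * L + b) (hx : L ≤ x) : 0 < a * x ^ 2 + b * x + c := by
  have expand : a * x ^ 2 + b * x + c
      = (a * L ^ 2 + b * L + c) + (2 * a * L + b) * (x - L) + a * (x - L) ^ 2 := by ring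
  rw [expand]
  have := mul_nonneg hslope (sub_nonneg.2 hx)
  have := mul_nonneg ha (sq_nonneg (x - L))
  linarith

theorem rSameDeriv_pos {m x : ℝ} (hm : 18 ≤ m) (hx : leftEnd m ≤ x) : 0 < rSameDeriv m x := by
  set s := √(4 * m - 5)
  have hs_sq : s ^ 2 = 4 * m - 5 := sq_sqrt (by linarith)
  have hs_ge : 8 ≤ s := le_sqrt_of_sq_le (by linarith)
  have hvalue : rSameDeriv m (leftEnd m) = (2 * m * s + 51 * m - 58 * s - 92) / 2 := by
    simp only [rSameDeriv, leftEnd]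
    linear_combination (15 / 2 : ℝ) * hs_sq
  have hvalue_pos : 0 < rSameDeriv m (leftEnd m) := by
    rw [hvalue]
    nlinarith [mul_nonneg (sub_nonneg.2 hm) (sub_nonneg.2 hs_ge)]
  have hslope : 0 ≤ 2 * 30 * leftEnd m + (2 * m - 88) := by
    simp only [leftEnd]
    linarith
  have := quadratic_pos_of_le (c := 28 - 11 * m / 2) (by norm_num)
    (by simpa only [rSameDeriv, add_sub_assoc] using hvalue_pos) hslope hx
  simpa only [rSameDeriv, add_sub_assoc] using this

theorem strictMonoOn_rSame {m : ℝ} (hm : 18 ≤ m) : StrictMonoOn (rSame m) (Ici (leftEnd m)) :=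
  strictMonoOn_of_hasDerivWithinAt_pos (convex_Ici _)
    (fun x _ => (hasDerivAt_rSame m x).continuousAt.continuousWithinAt)
    (fun x _ => (hasDerivAt_rSame m x).hasDerivWithinAt)
    (fun _ hx => rSameDeriv_pos hm (interior_subset hx))

theorem stmt_13 (m : ℝ) (hm : 18 ≤ m) :
    (∀ x : ℝ, (1 + Real.sqrt (4 * m - 5)) / 2 ≤ x →
      0 < 30 * x ^ 2 + (2 * m - 88) * x + 28 - 11 * m / 2) ∧
    StrictMonoOn (fun x : ℝ =>
        10 * x ^ 3 + (m - 44) * x ^ 2 + (28 - 11 * m / 2) * x + 80 - 4 * m)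
      (Set.Ici ((1 + Real.sqrt (4 * m - 5)) / 2)) :=
  ⟨fun _ hx => rSameDeriv_pos hm hx, strictMonoOn_rSame hm⟩
end

section
/- Define R_dist(x) = 11x^3 + (m-47)x^2 + (37 - 13m/2)x + 41 - m and L_m = (1 + √(4m-5))/2. Then for every real m ≥ 18, R_dist(L_m) = (4m^2 + 11m√(4m-5) - 143m - 31√(4m-5) + 349)/4 > 0. -/
theorem stmt_15 (m : ℝ) (hm : 18 ≤ m) :
    (11 * ((1 + Real.sqrt (4 * m - 5)) / 2) ^ 3
        + (m - 47) * ((1 + Real.sqrt (4 * m - 5)) / 2) ^ 2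
        + (37 - 13 * m / 2) * ((1 + Real.sqrt (4 * m - 5)) / 2) + 41 - m
      = (4 * m ^ 2 + 11 * m * Real.sqrt (4 * m - 5) - 143 * m - 31 * Real.sqrt (4 * m - 5) + 349) / 4) ∧
    0 < (4 * m ^ 2 + 11 * m * Real.sqrt (4 * m - 5) - 143 * m - 31 * Real.sqrt (4 * m - 5) + 349) / 4 := by
  set s := Real.sqrt (4 * m - 5) with hs
  have h5 : (0:ℝ) ≤ 4 * m - 5 := by linarith
  have hsq : s ^ 2 = 4 * m - 5 := Real.sq_sqrt h5
  have hs8 : (8:ℝ) ≤ s := by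
    rw [hs]
    have : (8:ℝ) = Real.sqrt 64 := by
      rw [show (64:ℝ) = 8^2 by norm_num, Real.sqrt_sq]; norm_num
    rw [this]
    exact Real.sqrt_le_sqrt (by linarith)
  constructor
  · have : s ^ 3 = s * (4 * m - 5) := by
      rw [pow_succ, hsq]; ring
    field_simp
    nlinarith [hsq, this]
  · nlinarith [hsq, hs8, sq_nonneg (m - 18)]
end
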